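/- Let x = x_1,…,x_k be a sequence in R and M an R-module. Then x is M-proregular if and only if x^{(n)} = x_1^{n_1},…,x_k^{n_k} is M-proregular for some (equivalently, every) tuple (n_1,…,n_k) of positive integers. -/
import Mathlib


/-- A sequence `z : Fin k → R` is `M`-proregular (Lipman's definition). -/
def IsProregular {R : Type*} [CommRing R] (M : Type*) [AddCommGroup M] [Module R M]
    {k : ℕ} (z : Fin k → R) : Prop :=
  ∀ i : Fin k, ∀ n : ℕ, ∃ m : ℕ, n ≤ m ∧
    ((Ideal.span ((fun j => z j ^ m) '' {j | j < i})) • (⊤ : Submodule R M)).comap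
        (LinearMap.lsmul R M (z i ^ m)) ≤
      ((Ideal.span ((fun j => z j ^ n) '' {j | j < i})) • (⊤ : Submodule R M)).comap
        (LinearMap.lsmul R M (z i ^ (m - n)))

section Aux

variable {R : Type*} [CommRing R] {M : Type*} [AddCommGroup M] [Module R M] {k : ℕ}

private lemma span_pow_le (z : Fin k → R) (S : Set (Fin k)) (a b : Fin k → ℕ)
    (h : ∀ j, b j ≤ a j) :
    Ideal.span ((fun j => z j ^ a j) '' S) ≤ Ideal.span ((fun j => z j ^ b j) '' S) := by
  rw [Ideal.span_le]
  rintro _ ⟨j, hj, rfl⟩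
  have e : z j ^ a j = z j ^ (a j - b j) * z j ^ b j := by
    rw [← pow_add, Nat.sub_add_cancel (h j)]
  show z j ^ a j ∈ Ideal.span ((fun j => z j ^ b j) '' S)
  rw [e]
  exact Ideal.mul_mem_left _ _ (Ideal.subset_span ⟨j, hj, rfl⟩)

private lemma mem_step {I I' : Ideal R} (hI : I ≤ I') {c c' : ℕ} (hc : c ≤ c') (r : R) {u : M}
    (h : r ^ c • u ∈ I • (⊤ : Submodule R M)) : r ^ c' • u ∈ I' • (⊤ : Submodule R M) := by
  have e : r ^ c' • u = r ^ (c' - c) • (r ^ c • u) := by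
    rw [smul_smul, ← pow_add, Nat.sub_add_cancel hc]
  rw [e]
  exact Submodule.smul_mem _ _ (Submodule.smul_mono_left hI h)

private lemma isProregular_pow_of (x : Fin k → R) (n : Fin k → ℕ) (hn : ∀ i, 1 ≤ n i)
    (hx : IsProregular M x) : IsProregular M (fun i => x i ^ n i) := by
  intro i N
  set P := Finset.univ.sup n with hPdef
  have hPi : ∀ j, n j ≤ P := fun j => Finset.le_sup (Finset.mem_univ j)
  have h1 : 1 ≤ P := le_trans (hn i) (hPi i)
  obtain ⟨m, hm, hle⟩ := hx i (P * N)
  have hNm : N ≤ m := le_trans (Nat.le_mul_of_pos_left N h1) hm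
  refine ⟨m, hNm, ?_⟩
  intro u hu
  simp only [Submodule.mem_comap, LinearMap.lsmul_apply, ← pow_mul] at hu ⊢
  -- hu : x i ^ (n i * m) • u ∈ span((fun j => x j ^ (n j * m)) '' S) • ⊤
  have hmm : m ≤ n i * m := Nat.le_mul_of_pos_left m (hn i)
  have hA : x i ^ (n i * m) • u ∈
      Ideal.span ((fun j : Fin k => x j ^ m) '' {j | j < i}) • (⊤ : Submodule R M) :=
    mem_step (span_pow_le x _ (fun j => n j * m) (fun _ => m)
      (fun j => Nat.le_mul_of_pos_left m (hn j))) le_rfl (x i) hu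
  have hB : x i ^ m • (x i ^ (n i * m - m) • u) ∈
      Ideal.span ((fun j : Fin k => x j ^ m) '' {j | j < i}) • (⊤ : Submodule R M) := by
    rw [smul_smul, ← pow_add, Nat.add_sub_cancel' hmm]
    exact hA
  have hC := hle (Submodule.mem_comap.mpr (by simpa using hB))
  have hC' : x i ^ ((m - P * N) + (n i * m - m)) • u ∈
      Ideal.span ((fun j : Fin k => x j ^ (P * N)) '' {j | j < i}) • (⊤ : Submodule R M) := by
    have := Submodule.mem_comap.mp hC
    rw [LinearMap.lsmul_apply, smul_smul, ← pow_add] at this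
    exact this
  have key : ∀ a b c d : ℕ, b ≤ a → a ≤ c → d ≤ b → (a - b) + (c - a) ≤ c - d := by
    intros; omega
  have hexp : (m - P * N) + (n i * m - m) ≤ n i * (m - N) := by
    calc (m - P * N) + (n i * m - m) ≤ n i * m - n i * N :=
          key m (P * N) (n i * m) (n i * N) hm hmm (Nat.mul_le_mul_right N (hPi i))
      _ = n i * (m - N) := (Nat.mul_sub _ _ _).symm
  exact mem_step (span_pow_le x _ (fun j => P * N) (fun j => n j * N)
    (fun j => Nat.mul_le_mul_right N (hPi j))) hexp (x i) hC'

private lemma isProregular_of_pow (x : Fin k → R) (n : Fin k → ℕ) (hn : ∀ i, 1 ≤ n i)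
    (hx : IsProregular M (fun i => x i ^ n i)) : IsProregular M x := by
  intro i N
  set P := Finset.univ.sup n with hPdef
  have hPi : ∀ j, n j ≤ P := fun j => Finset.le_sup (Finset.mem_univ j)
  have h1 : 1 ≤ P := le_trans (hn i) (hPi i)
  obtain ⟨Mm, hMm, hle⟩ := hx i N
  refine ⟨P * Mm, le_trans hMm (Nat.le_mul_of_pos_left Mm h1), ?_⟩
  intro u hu
  simp only [Submodule.mem_comap, LinearMap.lsmul_apply] at hu ⊢
  have hniM : n i * Mm ≤ P * Mm := Nat.mul_le_mul_right Mm (hPi i)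
  have hB : x i ^ (n i * Mm) • (x i ^ (P * Mm - n i * Mm) • u) ∈
      Ideal.span ((fun j : Fin k => x j ^ (n j * Mm)) '' {j | j < i}) • (⊤ : Submodule R M) := by
    rw [smul_smul, ← pow_add, Nat.add_sub_cancel' hniM]
    exact mem_step (span_pow_le x _ (fun _ => P * Mm) (fun j => n j * Mm)
      (fun j => Nat.mul_le_mul_right Mm (hPi j))) le_rfl (x i) hu
  have hC := hle (Submodule.mem_comap.mpr (by
    simp only [LinearMap.lsmul_apply, ← pow_mul]
    exact hB))
  have hC' : x i ^ (n i * (Mm - N) + (P * Mm - n i * Mm)) • u ∈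
      Ideal.span ((fun j : Fin k => x j ^ (n j * N)) '' {j | j < i}) • (⊤ : Submodule R M) := by
    have := Submodule.mem_comap.mp hC
    rw [LinearMap.lsmul_apply] at this
    simp only [← pow_mul] at this
    rw [smul_smul, ← pow_add] at this
    exact this
  have key : ∀ a b c d N' : ℕ, b ≤ a → N' ≤ d → d ≤ b → (b - d) + (a - b) ≤ a - N' := by
    intros; omega
  have hexp : n i * (Mm - N) + (P * Mm - n i * Mm) ≤ P * Mm - N := by
    have e1 : n i * (Mm - N) = n i * Mm - n i * N := Nat.mul_sub _ _ _
    rw [e1]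
    exact key (P * Mm) (n i * Mm) (n i * N) (n i * N) N hniM
      (Nat.le_mul_of_pos_left N (hn i)) (Nat.mul_le_mul_left (n i) hMm) |>.trans le_rfl
  exact mem_step (span_pow_le x _ (fun j => n j * N) (fun _ => N)
    (fun j => Nat.le_mul_of_pos_left N (hn j))) hexp (x i) hC'

end Aux

/-- `x` is `M`-proregular iff `x_1^{n_1},…,x_k^{n_k}` is `M`-proregular for some,
equivalently every, tuple of positive integers `(n_1,…,n_k)`. -/
theorem isProregular_iff_pow {R : Type*} [CommRing R]
    {M : Type*} [AddCommGroup M] [Module R M] {k : ℕ} (x : Fin k → R) :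
    (IsProregular M x ↔
      ∃ n : Fin k → ℕ, (∀ i, 1 ≤ n i) ∧ IsProregular M (fun i => x i ^ n i)) ∧
    (IsProregular M x ↔
      ∀ n : Fin k → ℕ, (∀ i, 1 ≤ n i) → IsProregular M (fun i => x i ^ n i)) := by
  have hone : (fun i => x i ^ (1 : ℕ)) = x := by funext i; rw [pow_one]
  constructor
  · constructor
    · intro h
      exact ⟨fun _ => 1, fun _ => le_rfl, by rw [hone]; exact h⟩
    · rintro ⟨n, hn, hx⟩
      exact isProregular_of_pow x n hn hx
  · constructor
    · intro h n hn
      exact isProregular_pow_of x n hn h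
    · intro h
      have := h (fun _ => 1) (fun _ => le_rfl)
      rwa [hone] at this
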